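/- arXiv:1610.09821 — 4 statements merged into one kernel-verified Lean document; each statement's English description precedes it below -/
import Mathlib

section
/- Let K be an algebraically closed field of characteristic p > 0, q = p^h with h ≥ 1, and let α₁, α₂, β₁, β₂ ∈ K with α₁β₂ − α₂β₁ ≠ 0. Then for every (c, c') ∈ K², the system of equations z₁^q + α₁z₁ + α₂z₂ = c, z₂^q + β₁z₁ + β₂z₂ = c' has exactly q² solutions (z₁, z₂) ∈ K². -/
/-!
A polynomial whose derivative is a nonzero constant is separable, so over an algebraically
closed field each of its fibres has exactly `natDegree` points. In characteristic `p` the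
polynomials `X^q + uX` and `X^(q²) + A X^q + uX` (with `q = p^h`, `u ≠ 0`) are of this kind.

If `α₂ = 0`, then `α₁β₂ ≠ 0` and the system is triangular: `z₁^q + α₁z₁ = c` has `q` solutions
and for each of them `z₂^q + β₂z₂ = c' - β₁z₁` has `q` solutions. If `α₂ ≠ 0`, the first
equation gives `z₂` as a function of `z₁`; multiplying the second by `α₂^q` and using that
`x ↦ x^q` is additive turns it into `z₁^(q²) + A z₁^q + α₂^(q-1)(α₁β₂ - α₂β₁) z₁ = d`.
-/

open Polynomial

theorem Set.ncard_setOf_fst_and_snd {α β : Type*} {P : α → Prop} {Q : α → β → Prop} {n : ℕ}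
    (hP : {x | P x}.Finite) (hQ : ∀ x, P x → {y | Q x y}.ncard = n) (hn : n ≠ 0) :
    {z : α × β | P z.1 ∧ Q z.1 z.2}.ncard = {x | P x}.ncard * n := by
  have hunion : {z : α × β | P z.1 ∧ Q z.1 z.2} = ⋃ x ∈ {x | P x}, Prod.mk x '' {y | Q x y} := by
    ext ⟨x, y⟩
    simp [and_comm]
  have hfin : ∀ x ∈ {x | P x}, (Prod.mk x '' {y | Q x y}).Finite := fun x hx =>
    (Set.finite_of_ncard_ne_zero (by rwa [hQ x hx])).image _
  have hdisj : {x | P x}.PairwiseDisjoint fun x => Prod.mk x '' {y | Q x y} := by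
    intro x _ x' _ hxx'
    simp only [Function.onFun, Set.disjoint_left, Set.mem_image]
    rintro _ ⟨y, -, rfl⟩ ⟨y', -, h⟩
    exact hxx' (congrArg Prod.fst h).symm
  rw [hunion, hP.ncard_biUnion hfin hdisj,
    finsum_mem_congr rfl fun x hx => by
      rw [ncard_image_of_injective _ (Prod.mk_right_injective x), hQ x hx],
    finsum_mem_eq_finite_toFinset_sum _ hP, Finset.sum_const, smul_eq_mul,
    Set.ncard_eq_toFinset_card _ hP]

theorem Set.ncard_eq_of_mem_iff_graph {α β : Type*} {S : Set (α × β)} {P : α → Prop}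
    {g : α → β} (hS : ∀ x y, (x, y) ∈ S ↔ P x ∧ y = g x) : S.ncard = {x | P x}.ncard := by
  have himage : S = (fun x => (x, g x)) '' {x | P x} := by
    ext ⟨x, y⟩
    simp [hS, eq_comm]
  rw [himage, ncard_image_of_injective _ fun x x' h => congrArg Prod.fst h]

section

variable {K : Type*} [Field K]

theorem ncard_setOf_eval_eq_of_derivative_eq_C [IsAlgClosed K] {f : K[X]} {u : K} (hu : u ≠ 0)
    (hf : derivative f = C u) (d : K) : {x | f.eval x = d}.ncard = f.natDegree := by
  classical
  set g := f - C d
  have hsep : g.Separable := by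
    rw [separable_def, show derivative g = C u by simp [g, hf]]
    exact ⟨0, C u⁻¹, by rw [zero_mul, zero_add, ← C_mul, inv_mul_cancel₀ hu, C_1]⟩
  have hroots : {x | f.eval x = d} = ↑g.roots.toFinset := by
    ext x
    simp [g, mem_roots hsep.ne_zero, sub_eq_zero]
  rw [hroots, Set.ncard_coe_finset, Multiset.toFinset_card_of_nodup (nodup_roots hsep),
    ← (IsAlgClosed.splits g).natDegree_eq_card_roots, natDegree_sub_C]

theorem frobenius_system_iff_of_ne_zero (p : ℕ) [ExpChar K p] (h : ℕ) {α₁ α₂ β₁ β₂ : K}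
    (hα₂ : α₂ ≠ 0) (c c' x y : K) :
    (x ^ p ^ h + α₁ * x + α₂ * y = c ∧ y ^ p ^ h + β₁ * x + β₂ * y = c') ↔
      (x ^ (p ^ h) ^ 2 + (α₁ ^ p ^ h + α₂ ^ (p ^ h - 1) * β₂) * x ^ p ^ h
          + α₂ ^ (p ^ h - 1) * (α₁ * β₂ - α₂ * β₁) * x
        = c ^ p ^ h + α₂ ^ (p ^ h - 1) * β₂ * c - α₂ ^ p ^ h * c') ∧
      y = (c - x ^ p ^ h - α₁ * x) / α₂ := by
  set q := p ^ h
  have hq : α₂ ^ (q - 1) * α₂ = α₂ ^ q := by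
    rw [← pow_succ, Nat.sub_add_cancel (Nat.one_le_pow _ _ (expChar_pos K p))]
  have hy : x ^ q + α₁ * x + α₂ * y = c ↔ y = (c - x ^ q - α₁ * x) / α₂ := by
    rw [eq_div_iff hα₂]
    constructor <;> intro H <;> linear_combination H
  rw [hy, and_comm, and_congr_left_iff]
  intro hxy
  have hlin : α₂ * y = c - x ^ q - α₁ * x := by rw [hxy, mul_div_cancel₀ _ hα₂]
  have hfrob : (α₂ * y) ^ q = c ^ q - x ^ q ^ 2 - α₁ ^ q * x ^ q := by
    rw [hlin, sub_pow_expChar_pow, sub_pow_expChar_pow, mul_pow, ← pow_mul, sq]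
  rw [← mul_right_inj' (pow_ne_zero q hα₂)]
  constructor <;> intro H <;>
    linear_combination -H + hfrob + α₂ ^ (q - 1) * β₂ * hlin - (β₁ * x + β₂ * y) * hq

section Count

variable [IsAlgClosed K] {q : ℕ} (hq : (q : K) = 0) (hq1 : 1 < q)
include hq hq1

theorem ncard_setOf_pow_add_mul_eq {u : K} (hu : u ≠ 0) (d : K) :
    {x : K | x ^ q + u * x = d}.ncard = q := by
  have hderiv : derivative (X ^ q + C u * X) = C u := by simp [derivative_X_pow, hq]
  have hdeg : (X ^ q + C u * X).natDegree = q := by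
    compute_degree!
    all_goals first | omega | simp [hq1.ne']
  simpa [hdeg] using ncard_setOf_eval_eq_of_derivative_eq_C hu hderiv d

theorem ncard_setOf_pow_sq_add_eq (A : K) {u : K} (hu : u ≠ 0) (d : K) :
    {x : K | x ^ q ^ 2 + A * x ^ q + u * x = d}.ncard = q ^ 2 := by
  have hderiv : derivative (X ^ q ^ 2 + C A * X ^ q + C u * X) = C u := by
    simp [derivative_X_pow, hq]
  have hdeg : (X ^ q ^ 2 + C A * X ^ q + C u * X).natDegree = q ^ 2 := by
    have : q < q ^ 2 := by nlinarith
    compute_degree!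
    all_goals first | omega | simp [hq1.ne', this.ne']
  simpa [hdeg] using ncard_setOf_eval_eq_of_derivative_eq_C hu hderiv d

theorem ncard_triangular_system {α₁ β₂ : K} (hα₁ : α₁ ≠ 0) (hβ₂ : β₂ ≠ 0) (β₁ c c' : K) :
    {z : K × K | z.1 ^ q + α₁ * z.1 = c ∧
        z.2 ^ q + β₁ * z.1 + β₂ * z.2 = c'}.ncard = q ^ 2 := by
  have hfst := ncard_setOf_pow_add_mul_eq hq hq1 hα₁ c
  have hsnd (x : K) : {y : K | y ^ q + β₁ * x + β₂ * y = c'}.ncard = q := by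
    refine .trans (congrArg Set.ncard (Set.ext fun y => ?_))
      (ncard_setOf_pow_add_mul_eq hq hq1 hβ₂ (c' - β₁ * x))
    show _ = _ ↔ _ = _
    constructor <;> intro H <;> linear_combination H
  rw [Set.ncard_setOf_fst_and_snd (P := fun x => x ^ q + α₁ * x = c)
    (Set.finite_of_ncard_ne_zero (by omega)) (fun x _ => hsnd x) (by omega), hfst, sq]

end Count

theorem ncard_frobenius_system_of_ne_zero [IsAlgClosed K] (p : ℕ) [ExpChar K p] {h : ℕ}
    (hq : ((p ^ h : ℕ) : K) = 0) (hq1 : 1 < p ^ h) {α₁ α₂ β₁ β₂ : K} (hα₂ : α₂ ≠ 0)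
    (hdet : α₁ * β₂ - α₂ * β₁ ≠ 0) (c c' : K) :
    {z : K × K | z.1 ^ p ^ h + α₁ * z.1 + α₂ * z.2 = c ∧
        z.2 ^ p ^ h + β₁ * z.1 + β₂ * z.2 = c'}.ncard = (p ^ h) ^ 2 := by
  rw [Set.ncard_eq_of_mem_iff_graph (frobenius_system_iff_of_ne_zero p h hα₂ c c')]
  exact ncard_setOf_pow_sq_add_eq hq hq1 _ (mul_ne_zero (pow_ne_zero _ hα₂) hdet) _

end

/-- Over an algebraically closed field `K` of characteristic `p`, with `q = p^h` and
`α₁β₂ − α₂β₁ ≠ 0`, the system `z₁^q + α₁z₁ + α₂z₂ = c`, `z₂^q + β₁z₁ + β₂z₂ = c'`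
has exactly `q²` solutions in `K × K`. -/
theorem stmt_2 (p h : ℕ) (hp : p.Prime) (hh : 1 ≤ h)
    (K : Type*) [Field K] [CharP K p] [IsAlgClosed K]
    (α₁ α₂ β₁ β₂ : K) (hdet : α₁ * β₂ - α₂ * β₁ ≠ 0) (c c' : K) :
    {z : K × K | z.1 ^ (p ^ h) + α₁ * z.1 + α₂ * z.2 = c ∧
        z.2 ^ (p ^ h) + β₁ * z.1 + β₂ * z.2 = c'}.ncard = (p ^ h) ^ 2 := by
  have : Fact p.Prime := ⟨hp⟩
  have hq : ((p ^ h : ℕ) : K) = 0 := (CharP.cast_eq_zero_iff K p _).mpr (dvd_pow_self p (by omega))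
  have hq1 : 1 < p ^ h := Nat.one_lt_pow (by omega) hp.one_lt
  rcases eq_or_ne α₂ 0 with rfl | hα₂
  · have hαβ : α₁ * β₂ ≠ 0 := by simpa using hdet
    simpa using ncard_triangular_system hq hq1 (left_ne_zero_of_mul hαβ)
      (right_ne_zero_of_mul hαβ) β₁ c c'
  · exact ncard_frobenius_system_of_ne_zero p hq hq1 hα₂ hdet c c'
end

section
/- Let K be a field of characteristic zero and let w ∈ K[[X]] be a formal power series with w(0) = 1 satisfying w(X)^p = w(pX) (i.e. the substitution of pX into w equals the p-th power of w). Then w′(X) = w′(0)·w(X) as formal power series, and consequently w(X) = exp(a·X) where a = w′(0). -/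
/-!
Both `w` and `exp (a X)` with `a = w′(0)` have constant term `1` and satisfy `f ^ p = f (p X)`.
If two such series agree below degree `n ≥ 2`, then `f ^ p - g ^ p = (f - g) · Σ fⁱ g^(p-1-i)`
has `n`-th coefficient `p · (fₙ - gₙ)`, while `(f - g)(p X)` has `pⁿ · (fₙ - gₙ)`; since `pⁿ ≠ p`
the `n`-th coefficients agree as well. So `w = exp (a X)`, whose derivative is `a · exp (a X)`.
-/

open PowerSeries

namespace PowerSeries

variable {R : Type*}

theorem coeff_mul_eq_coeff_mul_constantCoeff [CommSemiring R] {f : R⟦X⟧} {n : ℕ}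
    (hf : ∀ m < n, coeff m f = 0) (g : R⟦X⟧) :
    coeff n (f * g) = coeff n f * constantCoeff g := by
  obtain ⟨d, rfl⟩ := X_pow_dvd_iff.mpr hf
  simp [mul_assoc, coeff_X_pow_mul']

@[simp]
theorem constantCoeff_rescale [CommSemiring R] (a : R) (f : R⟦X⟧) :
    constantCoeff (rescale a f) = constantCoeff f := by
  rw [← coeff_zero_eq_constantCoeff_apply, coeff_rescale, pow_zero, one_mul,
    coeff_zero_eq_constantCoeff_apply]

theorem derivative_rescale [CommSemiring R] (a : R) (f : R⟦X⟧) :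
    d⁄dX R (rescale a f) = C a * rescale a (d⁄dX R f) := by
  ext n
  simp only [coeff_derivative, coeff_rescale, coeff_C_mul]
  ring

theorem derivative_rescale_exp [CommRing R] [Algebra ℚ R] (a : R) :
    d⁄dX R (rescale a (exp R)) = C a * rescale a (exp R) := by
  rw [derivative_rescale, derivative_exp]

theorem rescale_exp_pow [CommRing R] [Algebra ℚ R] (a : R) (k : ℕ) :
    rescale a (exp R) ^ k = rescale (k : R) (rescale a (exp R)) := by
  rw [← map_pow, exp_pow_eq_rescale_exp, rescale_rescale, rescale_rescale, mul_comm]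

theorem coeff_pow_sub_pow_of_coeff_eq [CommRing R] {f g : R⟦X⟧}
    (hf : constantCoeff f = 1) (hg : constantCoeff g = 1) {n : ℕ}
    (hfg : ∀ m < n, coeff m f = coeff m g) (p : ℕ) :
    coeff n (f ^ p - g ^ p) = p * (coeff n f - coeff n g) := by
  have hsub : ∀ m < n, coeff m (f - g) = 0 := fun m hm => by
    rw [map_sub, hfg m hm, sub_self]
  rw [← geom_sum₂_mul, mul_comm, coeff_mul_eq_coeff_mul_constantCoeff hsub, map_sub, mul_comm]
  simp [hf, hg]

theorem eq_of_pow_eq_rescale [CommRing R] [IsAddTorsionFree R] {p : ℕ} (hp : 1 < p)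
    {f g : R⟦X⟧} (hf₀ : constantCoeff f = 1) (hg₀ : constantCoeff g = 1)
    (h₁ : coeff 1 f = coeff 1 g) (hf : f ^ p = rescale (p : R) f)
    (hg : g ^ p = rescale (p : R) g) : f = g := by
  ext n
  induction n using Nat.strong_induction_on with
  | _ n ih =>
    rcases n with _ | _ | n
    · simp [hf₀, hg₀]
    · exact h₁
    · have key := coeff_pow_sub_pow_of_coeff_eq hf₀ hg₀ ih p
      rw [hf, hg, ← map_sub, coeff_rescale, map_sub] at key
      have hp_lt : p < p ^ (n + 2) := lt_self_pow₀ hp (by omega)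
      have hsmul : (p ^ (n + 2) - p) • (coeff (n + 2) f - coeff (n + 2) g) = 0 := by
        rw [sub_nsmul _ hp_lt.le, nsmul_eq_mul, nsmul_eq_mul, Nat.cast_pow, key, add_neg_cancel]
      exact sub_eq_zero.mp ((nsmul_eq_zero_iff_right (Nat.sub_ne_zero_of_lt hp_lt)).mp hsmul)

end PowerSeries

/-- Let `K` be a field of characteristic zero and `w ∈ K[[X]]` with `w(0) = 1` and
`w(X)^p = w(pX)`. Then `w′ = w′(0)·w`, and `w = exp(aX)` with `a = w′(0)` (here
`exp(aX)` is the rescaling by `a` of the formal exponential series). -/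
theorem stmt_6 (p : ℕ) (hp : p.Prime) (K : Type*) [Field K] [CharZero K]
    (w : PowerSeries K) (h0 : PowerSeries.constantCoeff w = 1)
    (hw : w ^ p = PowerSeries.rescale (p : K) w) :
    w.derivativeFun = PowerSeries.C (PowerSeries.coeff 1 w) * w ∧
    w = PowerSeries.rescale (PowerSeries.coeff 1 w) (PowerSeries.exp K) := by
  set a := coeff 1 w
  have hw_exp : w = rescale a (exp K) :=
    eq_of_pow_eq_rescale hp.one_lt h0 (by simp) (by simp [a, coeff_rescale, coeff_exp]) hw
      (rescale_exp_pow a p)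
  refine ⟨?_, hw_exp⟩
  rw [hw_exp]
  exact derivative_rescale_exp a
end

section
/- Let K be a complete nonarchimedean field of characteristic p whose valuation v is nontrivial, let q = p^h, and suppose (x_i)_{i≥0} is a sequence in K such that v(x_{i+1}^q − x_i) ≥ v(x_i) + δ for all i and some fixed δ > 0, with v(x_i) bounded. Then for every n ≥ 0 the sequence (x_{n+m}^{q^m})_{m≥0} is Cauchy, hence converges to a limit x'_n ∈ K, and these limits satisfy (x'_{n+1})^q = x'_n. -/
open Filter

/-- Let `K` be a complete nonarchimedean field of characteristic `p` with nontrivial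
norm, `q = p^h`. Suppose `(x_i)` satisfies `v(x_{i+1}^q − x_i) ≥ v(x_i) + δ` for a
fixed `δ > 0` (in norm: `‖x_{i+1}^q − x_i‖ ≤ p^{−δ}·‖x_i‖`), with `v(x_i)` bounded
(in norm: `‖x_i‖` bounded above and below by positive constants). Then for every `n`
the sequence `(x_{n+m}^{q^m})_m` is Cauchy, hence converges to some `x'_n ∈ K`, and
`(x'_{n+1})^q = x'_n`. -/
theorem stmt_13 (p h : ℕ) (hp : p.Prime) (hh : 1 ≤ h)
    (K : Type*) [NontriviallyNormedField K] [CompleteSpace K] [IsUltrametricDist K]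
    [CharP K p]
    (x : ℕ → K) (δ : ℝ) (hδ : 0 < δ)
    (hx : ∀ i, ‖(x (i + 1)) ^ (p ^ h) - x i‖ ≤ (p : ℝ) ^ (-δ) * ‖x i‖)
    (hbound : ∃ B C : ℝ, 0 < C ∧ ∀ i, C ≤ ‖x i‖ ∧ ‖x i‖ ≤ B) :
    (∀ n, CauchySeq (fun m : ℕ => (x (n + m)) ^ ((p ^ h) ^ m))) ∧
    ∃ x' : ℕ → K,
      (∀ n, Tendsto (fun m : ℕ => (x (n + m)) ^ ((p ^ h) ^ m)) atTop (nhds (x' n))) ∧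
      (∀ n, (x' (n + 1)) ^ (p ^ h) = x' n) := by
  haveI : Fact p.Prime := ⟨hp⟩
  obtain ⟨B, C, hC, hBC⟩ := hbound
  set q : ℕ := p ^ h with hq
  have hp1 : (1 : ℝ) < p := by exact_mod_cast hp.one_lt
  set r : ℝ := (p : ℝ) ^ (-δ) with hr
  have hr0 : 0 < r := Real.rpow_pos_of_pos (by positivity) _
  have hr1 : r < 1 := Real.rpow_lt_one_of_one_lt_of_neg hp1 (by linarith)
  have hq2 : 2 ≤ q := by
    calc 2 ≤ p := hp.two_le
    _ = p ^ 1 := (pow_one p).symm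
    _ ≤ p ^ h := Nat.pow_le_pow_right hp.pos hh
  -- norm of x i is positive
  have hxpos : ∀ i, 0 < ‖x i‖ := fun i => lt_of_lt_of_le hC (hBC i).1
  have hB0 : 0 < B := lt_of_lt_of_le (hxpos 0) (hBC 0).2
  -- key: ‖x (i+1)‖ ^ q = ‖x i‖
  have keyA : ∀ i, ‖x (i + 1)‖ ^ q = ‖x i‖ := by
    intro i
    have h1 : ‖x (i + 1) ^ q - x i‖ < ‖x i‖ := by
      calc ‖x (i + 1) ^ q - x i‖ ≤ r * ‖x i‖ := hx i
      _ < 1 * ‖x i‖ := mul_lt_mul_of_pos_right hr1 (hxpos i)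
      _ = ‖x i‖ := one_mul _
    have hmax1 : ‖x (i + 1) ^ q‖ ≤ max ‖x (i + 1) ^ q - x i‖ ‖x i‖ := by
      simpa using IsUltrametricDist.norm_add_le_max (x (i + 1) ^ q - x i) (x i)
    have hmax2 : ‖x i‖ ≤ max ‖x (i + 1) ^ q‖ ‖x (i + 1) ^ q - x i‖ := by
      calc ‖x i‖ = ‖(x i - x (i + 1) ^ q) + x (i + 1) ^ q‖ := by ring_nf
      _ ≤ max ‖x i - x (i + 1) ^ q‖ ‖x (i + 1) ^ q‖ :=
          IsUltrametricDist.norm_add_le_max _ _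
      _ = max ‖x (i + 1) ^ q‖ ‖x (i + 1) ^ q - x i‖ := by rw [norm_sub_rev, max_comm]
    have h2 : ‖x (i + 1) ^ q‖ = ‖x i‖ := by
      refine le_antisymm (hmax1.trans (max_le h1.le le_rfl)) ?_
      by_contra hlt
      push_neg at hlt
      exact absurd (hmax2.trans_lt (max_lt hlt h1)) (lt_irrefl _)
    rw [← h2, norm_pow]
  -- ‖x (n+m)‖ ^ (q^m) = ‖x n‖
  have keyB : ∀ n m, ‖x (n + m)‖ ^ (q ^ m) = ‖x n‖ := by
    intro n m
    induction m with
    | zero => simp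
    | succ m ih =>
      have : ‖x (n + (m + 1))‖ ^ q ^ (m + 1) = (‖x (n + m + 1)‖ ^ q) ^ q ^ m := by
        rw [← pow_mul, ← Nat.add_assoc, hq]
        ring_nf
      rw [this, keyA (n + m), ih]
  -- difference bound
  have hdiff : ∀ n m, ‖(x (n + m)) ^ (q ^ m) - (x (n + (m + 1))) ^ (q ^ (m + 1))‖
      ≤ B * r ^ m := by
    intro n m
    have hfrob : (x (n + (m + 1))) ^ (q ^ (m + 1)) - (x (n + m)) ^ (q ^ m)
        = (x (n + m + 1) ^ q - x (n + m)) ^ (q ^ m) := by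
      have hsub := sub_pow_char_pow (R := K) (p := p) (x := x (n + m + 1) ^ p ^ h)
        (y := x (n + m)) (n := h * m)
      rw [hq]
      simp only [← pow_mul]
      rw [hsub, ← pow_mul, ← pow_add, show h * (m + 1) = h + h * m from by ring,
        show n + (m + 1) = n + m + 1 from by omega]
    rw [norm_sub_rev, hfrob, norm_pow]
    have hb : ‖x (n + m + 1) ^ q - x (n + m)‖ ^ q ^ m ≤ (r * ‖x (n + m)‖) ^ q ^ m := by
      apply pow_le_pow_left₀ (norm_nonneg _) (hx (n + m))
    calc ‖x (n + m + 1) ^ q - x (n + m)‖ ^ q ^ m ≤ (r * ‖x (n + m)‖) ^ q ^ m := hb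
    _ = r ^ q ^ m * ‖x (n + m)‖ ^ q ^ m := mul_pow _ _ _
    _ = r ^ q ^ m * ‖x n‖ := by rw [keyB]
    _ ≤ r ^ m * B := by
        apply mul_le_mul _ (hBC n).2 (norm_nonneg _) (pow_nonneg hr0.le m)
        exact pow_le_pow_of_le_one hr0.le hr1.le (Nat.lt_pow_self (n := m) (by omega : 1 < q)).le
    _ = B * r ^ m := mul_comm _ _
  have hcauchy : ∀ n, CauchySeq (fun m : ℕ => (x (n + m)) ^ (q ^ m)) := by
    intro n
    apply SeminormedAddCommGroup.cauchySeq_of_le_geometric hr1 (C := B)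
    intro m
    exact hdiff n m
  refine ⟨hcauchy, ?_⟩
  have hlim : ∀ n, ∃ y : K, Tendsto (fun m : ℕ => (x (n + m)) ^ (q ^ m)) atTop (nhds y) :=
    fun n => cauchySeq_tendsto_of_complete (hcauchy n)
  choose x' hx' using hlim
  refine ⟨x', hx', fun n => ?_⟩
  have h1 : Tendsto (fun m : ℕ => ((x (n + 1 + m)) ^ (q ^ m)) ^ q) atTop
      (nhds ((x' (n + 1)) ^ q)) := (hx' (n + 1)).pow q
  have h2 : ∀ m : ℕ, ((x (n + 1 + m)) ^ (q ^ m)) ^ q = (x (n + (m + 1))) ^ (q ^ (m + 1)) := by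
    intro m
    rw [← pow_mul, ← pow_succ]
    congr 2
    omega
  rw [funext h2] at h1
  have h3 : Tendsto (fun m : ℕ => (x (n + (m + 1))) ^ (q ^ (m + 1))) atTop (nhds (x' n)) :=
    (hx' n).comp (tendsto_add_atTop_nat 1)
  exact tendsto_nhds_unique h1 h3
end

section
/- Let B be a perfect 𝔽_p-algebra and A a ring that is p-adically separated and complete, with A/pA given. Then there is a natural bijection between ring homomorphisms W(B) → A (from the Witt vectors of B) and ring homomorphisms B → A^♭, where A^♭ = lim_{x↦x^p} A/pA. Concretely, to f : B → A^♭ one associates g : W(B) → A with g((x_n)_{n≥0}) = Σ_{n≥0} p^n · θ_A(f_n(x_n)), where f_n = lim of p^n-th roots and θ_A is the projection to the 0-th component lifted to A. -/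
/-!
Reduction modulo `p` sends `g : W(B) →+* A` to `b ↦ g([b]) mod p`, a ring map `B →+* A/p` because
`W(B)/p ≅ B`; as `B` is perfect, such maps are the same as ring maps `B →+* A^♭`. Reduction is
injective: `[b] = [b^{1/p^n}]^{p^n}`, a congruence mod `p` between `p^n`-th powers is one mod
`p^{n+1}`, and a map out of `W(B)` to a ring in which `p` is nilpotent is determined by its values
on Teichmüller lifts. It is surjective because `f : B →+* A^♭` is the reduction of `θ_A ∘ W(f)`,
where `θ_A : W(A^♭) →+* A` is Fontaine's map.
-/

open Ideal WittVector

namespace Ideal.Quotient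

variable {A : Type*} [CommRing A] {p : ℕ}

theorem mk_pow_succ_pow_eq_of_mk_eq {x y : A}
    (h : mk (span {(p : A)}) x = mk (span {(p : A)}) y) (n : ℕ) :
    mk (span {(p : A)} ^ (n + 1)) (x ^ p ^ n) = mk (span {(p : A)} ^ (n + 1)) (y ^ p ^ n) := by
  rw [Ideal.Quotient.eq, span_singleton_pow, mem_span_singleton]
  exact_mod_cast dvd_sub_pow_of_dvd_sub (mem_span_singleton.mp (Ideal.Quotient.eq.mp h)) n

theorem isNilpotent_natCast_mod_span_pow (n : ℕ) : IsNilpotent (p : A ⧸ span {(p : A)} ^ n) := by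
  refine ⟨n, ?_⟩
  rw [← map_natCast (mk _), ← map_pow, eq_zero_iff_mem, span_singleton_pow]
  exact mem_span_singleton_self _

end Ideal.Quotient

variable {p : ℕ} [Fact p.Prime]

theorem not_isUnit_natCast_of_charP_quotient {A : Type*} [CommRing A]
    [CharP (A ⧸ span {(p : A)}) p] : ¬IsUnit (p : A) := by
  have : Nontrivial (A ⧸ span {(p : A)}) :=
    CharP.nontrivial_of_char_ne_one (Fact.out : p.Prime).ne_one
  rw [← span_singleton_eq_top]
  exact Ideal.Quotient.nontrivial_iff.mp this

namespace WittVector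

variable {B : Type*} [CommRing B] [CharP B p] [PerfectRing B p] {A : Type*} [CommRing A]

noncomputable def reduceModP (g : WittVector p B →+* A) : B →+* A ⧸ span {(p : A)} :=
  (constantCoeff (p := p)).liftOfSurjective (constantCoeff_surjective p)
    ⟨(Ideal.Quotient.mk _).comp g, by
      rw [ker_constantCoeff, span_le, Set.singleton_subset_iff, SetLike.mem_coe, RingHom.mem_ker,
        RingHom.comp_apply, map_natCast, Ideal.Quotient.eq_zero_iff_mem]
      exact mem_span_singleton_self _⟩

theorem reduceModP_coeff_zero (g : WittVector p B →+* A) (x : WittVector p B) :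
    reduceModP g (x.coeff 0) = Ideal.Quotient.mk _ (g x) :=
  RingHom.liftOfRightInverse_comp_apply _ _ _ _ x

theorem reduceModP_apply (g : WittVector p B →+* A) (b : B) :
    reduceModP g b = Ideal.Quotient.mk _ (g (teichmuller p b)) := by
  rw [← reduceModP_coeff_zero, teichmuller_coeff_zero]

theorem reduceModP_injective [IsHausdorff (span {(p : A)}) A] :
    Function.Injective (reduceModP (p := p) (B := B) (A := A)) := by
  intro g g' h
  have hmodp (c : B) : Ideal.Quotient.mk (span {(p : A)}) (g (teichmuller p c)) =
      Ideal.Quotient.mk _ (g' (teichmuller p c)) := by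
    rw [← reduceModP_apply, ← reduceModP_apply, h]
  have hmodpow (n : ℕ) : (Ideal.Quotient.mk (span {(p : A)} ^ (n + 1))).comp g =
      (Ideal.Quotient.mk _).comp g' := by
    refine eq_of_apply_teichmuller_eq _ _ (Quotient.isNilpotent_natCast_mod_span_pow _)
      fun b ↦ ?_
    simp only [RingHom.comp_apply]
    rw [← iterate_frobeniusEquiv_symm_pow_p_pow B p b n, map_pow (teichmuller p), map_pow g,
      map_pow g']
    exact Quotient.mk_pow_succ_pow_eq_of_mk_eq (hmodp _) n
  exact RingHom.coe_inj (IsHausdorff.StrictMono.funext' _ Order.succ_strictMono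
    fun n x ↦ congr($(hmodpow n) x))

variable [Fact ¬IsUnit (p : A)] [IsAdicComplete (span {(p : A)}) A]

theorem reduceModP_fontaineTheta_comp_map (f : B →+* PreTilt A p) :
    reduceModP ((fontaineTheta A p).comp (WittVector.map f)) = (PreTilt.coeff 0).comp f := by
  ext b
  rw [reduceModP_apply, RingHom.comp_apply, map_teichmuller, fontaineTheta_teichmuller,
    PreTilt.mk_untilt_eq_coeff_zero, RingHom.comp_apply]

noncomputable def ringHomEquivPreTilt : (WittVector p B →+* A) ≃ (B →+* PreTilt A p) where
  toFun g := Perfection.lift p B _ (reduceModP g)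
  invFun f := (fontaineTheta A p).comp (WittVector.map f)
  left_inv _ := reduceModP_injective <|
    (reduceModP_fontaineTheta_comp_map _).trans ((Perfection.lift p B _).symm_apply_apply _)
  right_inv f :=
    (congrArg (Perfection.lift p B _) (reduceModP_fontaineTheta_comp_map f)).trans
      ((Perfection.lift p B _).apply_symm_apply f)

theorem coeff_ringHomEquivPreTilt_apply (g : WittVector p B →+* A) (b : B) (n : ℕ) :
    PreTilt.coeff n (ringHomEquivPreTilt g b) =
      Ideal.Quotient.mk _ (g (teichmuller p ((_root_.frobeniusEquiv B p).symm^[n] b))) :=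
  reduceModP_apply g _

end WittVector

theorem stmt_16_general (p : ℕ) [Fact p.Prime]
    (B : Type*) [CommRing B] [CharP B p] [PerfectRing B p]
    (A : Type*) [CommRing A] [IsAdicComplete (Ideal.span {(p : A)}) A]
    [CharP (A ⧸ Ideal.span {(p : A)}) p] :
    ∃ E : (WittVector p B →+* A) ≃
        (B →+* Perfection (A ⧸ Ideal.span {(p : A)}) p),
      ∀ (g : WittVector p B →+* A) (b : B) (n : ℕ),
        Perfection.coeff (A ⧸ Ideal.span {(p : A)}) p n (E g b) =
          Ideal.Quotient.mk (Ideal.span {(p : A)})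
            (g (WittVector.teichmuller p (((frobeniusEquiv B p).symm)^[n] b))) :=
  haveI : Fact ¬IsUnit (p : A) := ⟨not_isUnit_natCast_of_charP_quotient⟩
  ⟨WittVector.ringHomEquivPreTilt, WittVector.coeff_ringHomEquivPreTilt_apply⟩

/-- Universal property of Witt vectors / tilting: for a perfect `𝔽_p`-algebra `B` and
a `p`-adically separated and complete ring `A`, ring homomorphisms `W(B) → A`
correspond bijectively to ring homomorphisms `B → A^♭ = lim_{x↦x^p} A/p`; concretely,
the homomorphism `f : B → A^♭` corresponding to `g : W(B) → A` has `n`-th component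
`f(b)_n = g([b^{p^{-n}}]) mod p`, where `[·]` is the Teichmüller lift (this is
equivalent to the formula `g((x_n)) = Σ p^n θ_A(f_n(x_n))`). -/
theorem stmt_16 (p : ℕ) [Fact p.Prime]
    (B : Type*) [CommRing B] [CharP B p] [ExpChar B p] [PerfectRing B p]
    (A : Type*) [CommRing A] [IsAdicComplete (Ideal.span {(p : A)}) A]
    [CharP (A ⧸ Ideal.span {(p : A)}) p] :
    ∃ E : (WittVector p B →+* A) ≃
        (B →+* Perfection (A ⧸ Ideal.span {(p : A)}) p),
      ∀ (g : WittVector p B →+* A) (b : B) (n : ℕ),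
        Perfection.coeff (A ⧸ Ideal.span {(p : A)}) p n (E g b) =
          Ideal.Quotient.mk (Ideal.span {(p : A)})
            (g (WittVector.teichmuller p (((frobeniusEquiv B p).symm)^[n] b))) :=
  stmt_16_general p B A
end
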